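/- Suppose ⟨B(a,b),c⟩ = −⟨B(a,c),b⟩ and ⟨B(a,a),Aa⟩ = 0 for all admissible a,b,c. Let N_α = (I+α²A)^{-1}, v^α = N_α^{-1}u^α. Then ⟨A N_α B(u^α, v^α), v^α⟩ = 0. -/
import Mathlib


open RealInnerProductSpace

/-- With `N = (I + α²A)⁻¹` (so `A N = (1/α²)(I − N)`), `⟨B(a,b),c⟩ = −⟨B(a,c),b⟩`
and `⟨B(a,a), A a⟩ = 0`, one has `⟨A N B(u^α, v^α), v^α⟩ = 0` where
`v^α = u^α + α² A u^α`. -/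
theorem stmt_12 {H : Type*} [NormedAddCommGroup H] [InnerProductSpace ℝ H]
    (B : H →ₗ[ℝ] H →ₗ[ℝ] H) (A : H →ₗ[ℝ] H) (α : ℝ) (hα : 0 < α)
    (hanti : ∀ a b c : H, ⟪B a b, c⟫ = -⟪B a c, b⟫)
    (hBA : ∀ a : H, ⟪B a a, A a⟫ = 0)
    (N : H →L[ℝ] H)
    (hN : ∀ v : H, N v + α ^ 2 • A (N v) = v)
    (hN' : ∀ v : H, N (v + α ^ 2 • A v) = v)
    (hN_symm : ∀ x y : H, ⟪N x, y⟫ = ⟪x, N y⟫) :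
    ∀ u : H,
      ⟪A (N (B u (u + α ^ 2 • A u))), u + α ^ 2 • A u⟫ = 0 := by
  intro u
  set v : H := u + α ^ 2 • A u with hv
  set w : H := B u v with hw
  have hα2 : α ^ 2 ≠ 0 := pow_ne_zero _ (ne_of_gt hα)
  have h1 : α ^ 2 • A (N w) = w - N w := by
    exact eq_sub_of_add_eq' (hN w)
  -- ⟪w, v⟫ = 0
  have hwv : ⟪w, v⟫ = 0 := by
    have := hanti u v v
    linarith
  -- ⟪w, u⟫ = 0
  have hwu : ⟪w, u⟫ = 0 := by
    have hexp : w = B u u + α ^ 2 • B u (A u) := by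
      simp [hw, hv, map_add, map_smul]
    have h2 : ⟪B u u, u⟫ = 0 := by
      have := hanti u u u; linarith
    have h3 : ⟪B u (A u), u⟫ = 0 := by
      have := hanti u u (A u)
      have := hBA u
      linarith [hanti u u (A u), hBA u]
    rw [hexp, inner_add_left, real_inner_smul_left, h2, h3]
    ring
  have hNwv : ⟪N w, v⟫ = 0 := by
    rw [hN_symm w v, show N v = u from hN' u]
    exact hwu
  have key : α ^ 2 * ⟪A (N w), v⟫ = 0 := by
    rw [← real_inner_smul_left, h1, inner_sub_left, hwv, hNwv]
    ring
  exact (mul_eq_zero.mp key).resolve_left hα2
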